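/- Let (X,d) be a geodesic δ-hyperbolic space in which every geodesic triangle is δ'-thin, let P ⊆ X be finite with diametral pair a*, b* and diametral midpoint m*, let q ∈ X, and let q' be a point of P farthest from q. Then the point m on a geodesic [q,q'] at distance diam(P)/2 − δ from q' satisfies d(m, m*) ≤ δ + 2δ'. -/
import Mathlib

noncomputable def gromovProd {X : Type*} [MetricSpace X] (t u v : X) : ℝ :=
  (dist u t + dist v t - dist u v) / 2

def IsDeltaHyperbolic (X : Type*) [MetricSpace X] (δ : ℝ) : Prop :=
  ∀ t u v w : X, gromovProd t u w ≥ min (gromovProd t u v) (gromovProd t v w) - δ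

/-- `γ` is a unit-speed geodesic from `a` to `b`, defined on `[0, dist a b]`. -/
def IsGeodesic {X : Type*} [MetricSpace X] (γ : ℝ → X) (a b : X) : Prop :=
  γ 0 = a ∧ γ (dist a b) = b ∧
    ∀ s ∈ Set.Icc (0 : ℝ) (dist a b), ∀ t ∈ Set.Icc (0 : ℝ) (dist a b),
      dist (γ s) (γ t) = |s - t|

/-- `X` is a geodesic space. -/
def GeodesicSpace (X : Type*) [MetricSpace X] : Prop :=
  ∀ a b : X, ∃ γ : ℝ → X, IsGeodesic γ a b

/-- Every geodesic triangle of `X` is `δ'`-thin: points of two sides emanating from a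
common vertex `t` that are identified under the comparison map to the tripod (i.e. at
equal arclength `ℓ ≤ (u|v)_t` from `t`) are at distance at most `δ'`. -/
def TrianglesThin (X : Type*) [MetricSpace X] (δ' : ℝ) : Prop :=
  ∀ (t u v : X) (γ₁ γ₂ : ℝ → X), IsGeodesic γ₁ t u → IsGeodesic γ₂ t v →
    ∀ ℓ : ℝ, 0 ≤ ℓ → ℓ ≤ gromovProd t u v → dist (γ₁ ℓ) (γ₂ ℓ) ≤ δ'

lemma isGeodesic_rev {X : Type*} [MetricSpace X] {γ : ℝ → X} {a b : X}
    (h : IsGeodesic γ a b) : IsGeodesic (fun t => γ (dist a b - t)) b a := by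
  obtain ⟨h0, h1, hd⟩ := h
  have hcomm : dist b a = dist a b := dist_comm _ _
  refine ⟨by simpa using h1, by simp [hcomm, h0], ?_⟩
  intro s hs t ht
  rw [hcomm] at hs ht
  have := hd (dist a b - s) ⟨by linarith [hs.2], by linarith [hs.1]⟩
    (dist a b - t) ⟨by linarith [ht.2], by linarith [ht.1]⟩
  simpa [abs_sub_comm, sub_sub_sub_cancel_left] using this

lemma aux_mid {X : Type*} [MetricSpace X] {δ δ' : ℝ}
    (hgeo : GeodesicSpace X) (hthin : TrianglesThin X δ')
    (a₀ b₀ q q' : X)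
    (ha : dist q' a₀ ≤ dist a₀ b₀) (hb : dist q' b₀ ≤ dist a₀ b₀)
    (haf : dist a₀ b₀ - 2*δ ≤ dist q' a₀)
    (hfa : dist q a₀ ≤ dist q q')
    (γ' : ℝ → X) (hγ' : IsGeodesic γ' a₀ b₀)
    (mstar : X) (hmstar : mstar = γ' (dist a₀ b₀ / 2))
    (γ : ℝ → X) (hγ : IsGeodesic γ q' q)
    (hnonneg : 0 ≤ dist a₀ b₀ / 2 - δ)
    (m : X) (hm : m = γ (dist a₀ b₀ / 2 - δ)) :
    dist m mstar ≤ δ + 2 * δ' := by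
  obtain ⟨η, hη⟩ := hgeo a₀ q'
  have hDa : dist a₀ q' = dist q' a₀ := dist_comm _ _
  set D := dist a₀ b₀ with hD
  set a := dist q' a₀ with ha'
  set b := dist q' b₀ with hb'
  have hD0 : 0 ≤ D := dist_nonneg
  have ha0 : 0 ≤ a := dist_nonneg
  have hb0 : 0 ≤ b := dist_nonneg
  set s := a - D/2 + δ with hs
  set p := (a + D - b)/2 with hp
  set ℓ := min s p with hℓ
  clear_value D a b s p ℓ
  have hs0 : 0 ≤ s := by linarith
  have hp0 : 0 ≤ p := by
    have := dist_triangle q' a₀ b₀; rw [hp]; linarith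
  have hℓ0 : 0 ≤ ℓ := by rw [hℓ]; exact le_min hs0 hp0
  have hsa : s ≤ a := by linarith
  have hsD : s ≤ D := by linarith
  have hℓs : ℓ ≤ s := by rw [hℓ]; exact min_le_left _ _
  -- step 1 : thinness at q'
  have h1 : dist m (η s) ≤ δ' := by
    have hγ₂ : IsGeodesic (fun t => η (dist a₀ q' - t)) q' a₀ := isGeodesic_rev hη
    have hgp : D/2 - δ ≤ gromovProd q' q a₀ := by
      unfold gromovProd
      rw [hDa]
      linarith
    have := hthin q' q a₀ γ _ hγ hγ₂ (D/2 - δ) hnonneg hgp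
    have he : dist a₀ q' - (D/2 - δ) = s := by rw [hDa, hs]; ring
    rw [hm]
    simpa [he] using this
  -- step 2 : thinness at a₀
  have h2 : dist (η ℓ) (γ' ℓ) ≤ δ' := by
    have hgp : ℓ ≤ gromovProd a₀ q' b₀ := by
      unfold gromovProd
      have hc : dist b₀ a₀ = D := by rw [hD]; exact dist_comm b₀ a₀
      rw [hc]
      have := min_le_right s p
      rw [← hℓ] at this
      rw [hp] at this
      linarith
    exact hthin a₀ q' b₀ η γ' hη hγ' ℓ hℓ0 hgp
  -- step 3 : along η
  have h3 : dist (η s) (η ℓ) = s - ℓ := by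
    have := hη.2.2 s ⟨hs0, by rw [hDa]; exact hsa⟩ ℓ ⟨hℓ0, by rw [hDa]; linarith⟩
    rw [this, abs_of_nonneg (by linarith)]
  -- step 4 : along γ'
  have h4 : dist (γ' ℓ) mstar = |ℓ - D/2| := by
    rw [hmstar]
    exact hγ'.2.2 ℓ ⟨hℓ0, by linarith⟩ (D/2) ⟨by linarith, by linarith⟩
  -- arithmetic
  have habs : s - ℓ + |ℓ - D/2| ≤ δ := by
    rcases le_total s p with h | h
    · have hes : ℓ = s := by rw [hℓ]; exact min_eq_left h
      have : |s - D/2| ≤ δ := abs_le.mpr ⟨by linarith, by linarith⟩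
      rw [hes]; linarith
    · have hep : ℓ = p := by rw [hℓ]; exact min_eq_right h
      rw [hep]
      rcases abs_cases (p - D/2) with ⟨he, _⟩ | ⟨he, _⟩ <;> rw [he] <;> linarith
  have t1 := dist_triangle4 m (η s) (η ℓ) (γ' ℓ)
  have t2 := dist_triangle m (γ' ℓ) mstar
  linarith

theorem near_diametral_midpoint {X : Type*} [MetricSpace X] {δ δ' : ℝ}
    (hgeo : GeodesicSpace X) (hX : IsDeltaHyperbolic X δ) (hthin : TrianglesThin X δ')
    (P : Finset X) (astar bstar : X) (hastar : astar ∈ P) (hbstar : bstar ∈ P)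
    (hdiam : ∀ p ∈ P, ∀ p' ∈ P, dist p p' ≤ dist astar bstar)
    (γstar : ℝ → X) (hγstar : IsGeodesic γstar astar bstar)
    (mstar : X) (hmstar : mstar = γstar (dist astar bstar / 2))
    (q q' : X) (hq' : q' ∈ P) (hfar : ∀ p ∈ P, dist q p ≤ dist q q')
    (γ : ℝ → X) (hγ : IsGeodesic γ q' q)
    (hnonneg : 0 ≤ dist astar bstar / 2 - δ)
    (hlen : dist astar bstar / 2 - δ ≤ dist q q')
    (m : X) (hm : m = γ (dist astar bstar / 2 - δ)) :
    dist m mstar ≤ δ + 2 * δ' := by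
  have haP : dist q' astar ≤ dist astar bstar := hdiam q' hq' astar hastar
  have hbP : dist q' bstar ≤ dist astar bstar := hdiam q' hq' bstar hbstar
  have hfa : dist q astar ≤ dist q q' := hfar astar hastar
  have hfb : dist q bstar ≤ dist q q' := hfar bstar hbstar
  have key : dist astar bstar - 2*δ ≤ dist q' astar ∨
      dist astar bstar - 2*δ ≤ dist q' bstar := by
    by_contra hcon
    push_neg at hcon
    obtain ⟨h1, h2⟩ := hcon
    have hX' := hX q astar q' bstar
    unfold gromovProd at hX'
    rw [dist_comm astar q, dist_comm bstar q, dist_comm q' q, dist_comm astar q'] at hX'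
    rcases le_total ((dist q astar + dist q q' - dist q' astar)/2)
        ((dist q q' + dist q bstar - dist q' bstar)/2) with h | h
    · rw [min_eq_left h] at hX'; linarith
    · rw [min_eq_right h] at hX'; linarith
  rcases key with hk | hk
  · exact aux_mid hgeo hthin astar bstar q q' haP hbP hk hfa γstar hγstar mstar hmstar
      γ hγ hnonneg m hm
  · have hγ'' : IsGeodesic (fun t => γstar (dist astar bstar - t)) bstar astar :=
      isGeodesic_rev hγstar
    have hDc : dist bstar astar = dist astar bstar := dist_comm _ _
    refine aux_mid hgeo hthin bstar astar q q' (by rw [hDc]; exact hbP)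
      (by rw [hDc]; exact haP) (by rw [hDc]; exact hk) hfb _ hγ'' mstar ?_
      γ hγ (by rw [hDc]; exact hnonneg) m (by rw [hDc]; exact hm)
    show mstar = γstar (dist astar bstar - dist bstar astar / 2)
    rw [hDc, hmstar]
    congr 1
    ring
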